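/- Let λ be a multipartition in P^{•,m}_n (• ∈ {0,s,ss}) with residues res(i,j,l) = Q_l q^{2(j-i)} (where Q₀ = Q_{0₊} = 1, Q_{0₋} = -1). Suppose (q, Q) is separate with respect to λ, i.e., for every standard tableau t of shape λ and every k, 𝚚(res_t(k)) ≠ 𝚚(res_t(k+1)). Then for a standard tableau t and 1 ≤ l ≤ n-1, s_l·t is standard if and only if there exists a standard tableau u of shape λ with s_l·𝚚(res(t)) = 𝚚(res(u)); and in that case u = s_l·t. (Requires the separateness condition P_n^{(•)}(q²,Q) ≠ 0.) -/

import Mathlib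

/-- A multipartition-like shape: `comps` components, each either strict
(shifted diagram) or an ordinary partition diagram.  A box is a triple
`(l, i, j)`: component `l`, row `i`, column `j` (all 0-indexed). -/
structure MultiShape where
  comps : ℕ
  isStrict : ℕ → Bool
  part : ℕ → ℕ → ℕ

namespace MultiShape

/-- The set of boxes of the diagram of the shape.  In a strict component the
`i`-th row is shifted `i` steps to the right. -/
def cells (Λ : MultiShape) : Set (ℕ × ℕ × ℕ) :=
  {b | b.1 < Λ.comps ∧
    (if Λ.isStrict b.1 then
        b.2.1 ≤ b.2.2 ∧ b.2.2 < b.2.1 + Λ.part b.1 b.2.1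
      else b.2.2 < Λ.part b.1 b.2.1)}

/-- `p : ℕ → ℕ` is a strict partition: weakly decreasing and strictly
decreasing on nonzero parts. -/
def IsStrictPartFun (p : ℕ → ℕ) : Prop :=
  Antitone p ∧ ∀ i, p (i + 1) ≠ 0 → p (i + 1) < p i

/-- Well-formedness of a shape: strict components are strict partitions,
ordinary components are partitions, and everything beyond `comps` is
normalized to zero. -/
def WellFormed (Λ : MultiShape) : Prop :=
  (∀ l < Λ.comps, Λ.isStrict l = true → IsStrictPartFun (Λ.part l)) ∧
  (∀ l < Λ.comps, Λ.isStrict l = false → Antitone (Λ.part l)) ∧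
  (∀ l, Λ.comps ≤ l → (Λ.part l = fun _ => 0) ∧ Λ.isStrict l = false)

/-- `t` is a standard tableau of shape `Λ` with entries `1,…,n`: a bijection
from the boxes onto `{1,…,n}`, increasing along rows and columns of each
component, normalized to `0` outside the diagram. -/
def IsStd (Λ : MultiShape) (n : ℕ) (t : ℕ × ℕ × ℕ → ℕ) : Prop :=
  Set.BijOn t Λ.cells (Set.Icc 1 n) ∧
  (∀ b ∈ Λ.cells, ∀ b' ∈ Λ.cells,
      b.1 = b'.1 → b.2.1 = b'.2.1 → b.2.2 < b'.2.2 → t b < t b') ∧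
  (∀ b ∈ Λ.cells, ∀ b' ∈ Λ.cells,
      b.1 = b'.1 → b.2.2 = b'.2.2 → b.2.1 < b'.2.1 → t b < t b') ∧
  (∀ b, b ∉ Λ.cells → t b = 0)

/-- The simple transposition `s_k = (k, k+1)` acting on entries. -/
def sw (k : ℕ) : Equiv.Perm ℕ := Equiv.swap k (k + 1)

/-- The permutation `s_{i_k} ⋯ s_{i_1}` associated to the word `w = [i_1,…,i_k]`
(the first letter acts first). -/
def wordPerm (w : List ℕ) : Equiv.Perm ℕ :=
  w.foldl (fun σ k => sw k * σ) 1

end MultiShape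

namespace MultiShape

/-- `𝚚(x) = 2(qx + (qx)⁻¹)/(q + q⁻¹)`. -/
def qval {K : Type} [Field K] (q x : K) : K := 2 * (q * x + (q * x)⁻¹) / (q + q⁻¹)

/-- The cyclotomic parameter attached to component `l`, where `e ∈ {0,1,2}` is
the number of strict components: `Q₀ = Q_{0₊} = 1`, `Q_{0₋} = -1`, and the
remaining components carry `Q₁,…,Q_m` (0-indexed as `Q 0,…,Q (m-1)`). -/
def Qcomp {K : Type} [Field K] (e : ℕ) (Q : ℕ → K) : ℕ → K := fun l =>
  if e = 0 then Q l
  else if e = 1 then (if l = 0 then 1 else Q (l - 1))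
  else if l = 0 then -1 else if l = 1 then 1 else Q (l - 2)

/-- The residue `res(i,j,l) = Q_l q^{2(j-i)}` of the box `b = (l,i,j)`. -/
def resBox {K : Type} [Field K] (q : K) (Qf : ℕ → K) (b : ℕ × ℕ × ℕ) : K :=
  Qf b.1 * q ^ (2 * ((b.2.2 : ℤ) - (b.2.1 : ℤ)))

/-- `res_t(k)`: the residue of the box of `t` containing the entry `k`. -/
noncomputable def resAt {K : Type} [Field K] (q : K) (Qf : ℕ → K)
    (Λ : MultiShape) (t : ℕ × ℕ × ℕ → ℕ) (k : ℕ) : K :=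
  resBox q Qf (Function.invFunOn t Λ.cells k)

/-- `Λ` encodes a shape in `P^{•,m}`, where `e ∈ {0,1,2}` is the number of
strict components corresponding to `• ∈ {0, s, ss}`. -/
def IsShape (Λ : MultiShape) (e m : ℕ) : Prop :=
  Λ.comps = e + m ∧ (∀ l, Λ.isStrict l = decide (l < e)) ∧ Λ.WellFormed

end MultiShape

/-!
Separateness forbids two distinct boxes that can both be added to the same down-closed
subdiagram `D` from having the same `𝚚`-residue: otherwise number `D` standardly, put the two
boxes next (their union with `D` is again down-closed), and complete to a standard tableau,
whose consecutive entries `|D| + 1`, `|D| + 2` would have equal `𝚚`-residues.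

If a standard `u` has `𝚚(res(u)) = s_l·𝚚(res(t))`, induction on `k` shows that `u` and `s_l·t`
put `k` into the same box: the two candidate boxes are addable to the subdiagram of the entries
`< k`, which `u` and `t` share, or, for `k = l` and `k = l + 1`, to the subdiagram of the entries
`≤ l` of `t`, respectively of `u`; hence they agree.
-/

namespace MultiShape

def Precedes (b' b : ℕ × ℕ × ℕ) : Prop :=
  b'.1 = b.1 ∧ (b'.2.1 = b.2.1 ∧ b'.2.2 < b.2.2 ∨ b'.2.2 = b.2.2 ∧ b'.2.1 < b.2.1)

lemma Precedes.add_lt {b' b : ℕ × ℕ × ℕ} (h : Precedes b' b) :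
    b'.2.1 + b'.2.2 < b.2.1 + b.2.2 := by
  rcases h with ⟨-, h | h⟩ <;> omega

lemma Precedes.ne {b' b : ℕ × ℕ × ℕ} (h : Precedes b' b) : b' ≠ b := by
  rintro rfl
  exact lt_irrefl _ h.add_lt

def IsDownset (Λ : MultiShape) (E : Set (ℕ × ℕ × ℕ)) : Prop :=
  E ⊆ Λ.cells ∧ ∀ b ∈ E, ∀ b' ∈ Λ.cells, Precedes b' b → b' ∈ E

def IsAddable (Λ : MultiShape) (E : Set (ℕ × ℕ × ℕ)) (b : ℕ × ℕ × ℕ) : Prop :=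
  b ∈ Λ.cells ∧ b ∉ E ∧ Λ.IsDownset (insert b E)

def IsFilling (E : Set (ℕ × ℕ × ℕ)) (f : ℕ × ℕ × ℕ → ℕ) : Prop :=
  Set.BijOn f E (Set.Icc 1 E.ncard) ∧ (∀ b ∈ E, ∀ b' ∈ E, Precedes b' b → f b' < f b) ∧
    ∀ b ∉ E, f b = 0

section Fillings

variable {Λ : MultiShape} {E F : Set (ℕ × ℕ × ℕ)} {b : ℕ × ℕ × ℕ} {f : ℕ × ℕ × ℕ → ℕ}

lemma isDownset_empty (Λ : MultiShape) : Λ.IsDownset ∅ :=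
  ⟨Set.empty_subset _, fun _ hb => hb.elim⟩

lemma isDownset_cells (Λ : MultiShape) : Λ.IsDownset Λ.cells :=
  ⟨subset_rfl, fun _ _ _ hb' _ => hb'⟩

lemma IsDownset.union (hE : Λ.IsDownset E) (hF : Λ.IsDownset F) : Λ.IsDownset (E ∪ F) :=
  ⟨Set.union_subset hE.1 hF.1, fun b hb b' hb' h =>
    hb.imp (hE.2 b · b' hb' h) (hF.2 b · b' hb' h)⟩

lemma IsAddable.mono (hb : Λ.IsAddable E b) (hF : Λ.IsDownset F) (hEF : E ⊆ F) (hbF : b ∉ F) :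
    Λ.IsAddable F b := by
  refine ⟨hb.1, hbF, ?_⟩
  rw [← Set.union_eq_right.mpr hEF, ← Set.insert_union]
  exact hb.2.2.union hF

lemma IsDownset.exists_isAddable (hF : Λ.IsDownset F) (hFfin : F.Finite) (hE : Λ.IsDownset E)
    (hEF : E ⊂ F) : ∃ b ∈ F, Λ.IsAddable E b := by
  obtain ⟨b, ⟨hbF, hbE⟩, hmin⟩ := Set.exists_min_image (F \ E) (fun b => b.2.1 + b.2.2)
    (hFfin.subset Set.sdiff_subset) (Set.nonempty_of_ssubset hEF)
  have hpred : ∀ b' ∈ Λ.cells, Precedes b' b → b' ∈ E := fun b' hb' h => by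
    by_contra hb'E
    exact (hmin b' ⟨hF.2 b hbF b' hb' h, hb'E⟩).not_gt h.add_lt
  refine ⟨b, hbF, hF.1 hbF, hbE, Set.insert_subset (hF.1 hbF) hE.1, ?_⟩
  rintro x (rfl | hx) b' hb' h
  · exact Or.inr (hpred b' hb' h)
  · exact Or.inr (hE.2 x hx b' hb' h)

lemma isFilling_empty : IsFilling ∅ fun _ => 0 := by
  refine ⟨?_, fun _ hb => hb.elim, fun _ _ => rfl⟩
  rw [Set.ncard_empty, Set.Icc_eq_empty (by omega)]
  exact Set.bijOn_empty _

lemma IsFilling.update_of_isAddable (hE : Λ.IsDownset E) (hEfin : E.Finite) (hf : IsFilling E f)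
    (hb : Λ.IsAddable E b) : IsFilling (insert b E) (Function.update f b (E.ncard + 1)) := by
  have hupd : Set.EqOn (Function.update f b (E.ncard + 1)) f E :=
    fun x hx => Function.update_of_ne (ne_of_mem_of_not_mem hx hb.2.1) _ _
  refine ⟨?_, ?_, ?_⟩
  · rw [Set.ncard_insert_of_notMem hb.2.1 hEfin, ← Order.succ_eq_add_one,
      ← Set.insert_Icc_right_eq_Icc_succ (by simp)]
    simpa using (hf.1.congr hupd.symm).insert (a := b) (by simp)
  · rintro x (rfl | hx) y (rfl | hy) h
    · exact absurd rfl h.ne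
    · rw [Function.update_self, hupd hy]
      exact Nat.lt_succ_of_le (hf.1.mapsTo hy).2
    · exact absurd (hE.2 x hx y hb.1 h) hb.2.1
    · rw [hupd hx, hupd hy]
      exact hf.2.1 x hx y hy h
  · intro x hx
    rw [Set.mem_insert_iff, not_or] at hx
    rw [Function.update_of_ne hx.1, hf.2.2 x hx.2]

lemma IsFilling.exists_extend {E F : Set (ℕ × ℕ × ℕ)} {f : ℕ × ℕ × ℕ → ℕ}
    (hE : Λ.IsDownset E) (hF : Λ.IsDownset F) (hFfin : F.Finite) (hEF : E ⊆ F) (hf : IsFilling E f) : ∃ g, IsFilling F g ∧ Set.EqOn g f E := by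
  rcases hEF.eq_or_ssubset with rfl | hss
  · exact ⟨f, hf, Set.eqOn_refl f E⟩
  obtain ⟨b, hbF, hb⟩ := hF.exists_isAddable hFfin hE hss
  have hlt : (F \ insert b E).ncard < (F \ E).ncard := by
    refine Set.ncard_lt_ncard ?_ (hFfin.subset Set.sdiff_subset)
    exact (Set.ssubset_iff_of_subset (Set.sdiff_subset_sdiff_right (Set.subset_insert b E))).2
      ⟨b, ⟨hbF, hb.2.1⟩, fun h => h.2 (Set.mem_insert b E)⟩
  obtain ⟨g, hg, hgf⟩ := IsFilling.exists_extend hb.2.2 hF hFfin (Set.insert_subset hbF hEF)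
    (hf.update_of_isAddable hE (hFfin.subset hEF) hb)
  exact ⟨g, hg, fun x hx => (hgf (Set.mem_insert_of_mem b hx)).trans
    (Function.update_of_ne (ne_of_mem_of_not_mem hx hb.2.1) _ _)⟩
termination_by (F \ E).ncard
decreasing_by exact hlt

lemma IsFilling.isStd {n : ℕ} (hf : IsFilling Λ.cells f) (hsize : Λ.cells.ncard = n) :
    Λ.IsStd n f :=
  ⟨hsize ▸ hf.1, fun b hb b' hb' h1 h2 h3 => hf.2.1 b' hb' b hb ⟨h1, .inl ⟨h2, h3⟩⟩,
    fun b hb b' hb' h1 h2 h3 => hf.2.1 b' hb' b hb ⟨h1, .inr ⟨h2, h3⟩⟩, hf.2.2⟩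

end Fillings

noncomputable def boxOf (Λ : MultiShape) (u : ℕ × ℕ × ℕ → ℕ) (k : ℕ) : ℕ × ℕ × ℕ :=
  Function.invFunOn u Λ.cells k

def shapeLE (Λ : MultiShape) (u : ℕ × ℕ × ℕ → ℕ) (j : ℕ) : Set (ℕ × ℕ × ℕ) :=
  {b | b ∈ Λ.cells ∧ u b ≤ j}

lemma boxOf_perm_comp {Λ : MultiShape} {u : ℕ × ℕ × ℕ → ℕ} (σ : Equiv.Perm ℕ)
    (hu : Set.InjOn u Λ.cells) (k : ℕ) : Λ.boxOf (σ ∘ u) k = Λ.boxOf u (σ.symm k) := by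
  unfold boxOf
  by_cases h : ∃ b ∈ Λ.cells, u b = σ.symm k
  · obtain ⟨b, hb, hbk⟩ := h
    obtain rfl : k = σ (u b) := by rw [hbk, Equiv.apply_symm_apply]
    rw [Equiv.symm_apply_apply]
    exact ((σ.injective.comp_injOn hu).leftInvOn_invFunOn hb).trans
      (hu.leftInvOn_invFunOn hb).symm
  · rw [Function.invFunOn_neg h, Function.invFunOn_neg]
    simpa only [Function.comp_apply, σ.eq_symm_apply] using h

namespace IsStd

variable {Λ : MultiShape} {n : ℕ} {u : ℕ × ℕ × ℕ → ℕ}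

lemma boxOf_mem (hu : Λ.IsStd n u) {k : ℕ} (h1 : 1 ≤ k) (hk : k ≤ n) :
    Λ.boxOf u k ∈ Λ.cells ∧ u (Λ.boxOf u k) = k :=
  Function.invFunOn_pos (hu.1.surjOn ⟨h1, hk⟩)

lemma boxOf_apply (hu : Λ.IsStd n u) {b : ℕ × ℕ × ℕ} (hb : b ∈ Λ.cells) :
    Λ.boxOf u (u b) = b :=
  hu.1.injOn.leftInvOn_invFunOn hb

lemma isDownset_shapeLE (hu : Λ.IsStd n u) (j : ℕ) : Λ.IsDownset (Λ.shapeLE u j) := by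
  refine ⟨fun b hb => hb.1, ?_⟩
  rintro b ⟨hb, hbj⟩ b' hb' ⟨hl, h | h⟩
  · exact ⟨hb', (hu.2.1 b' hb' b hb hl h.1 h.2).le.trans hbj⟩
  · exact ⟨hb', (hu.2.2.1 b' hb' b hb hl h.1 h.2).le.trans hbj⟩

lemma boxOf_notMem_shapeLE (hu : Λ.IsStd n u) {j k : ℕ} (hk : k ≤ n) (hjk : j < k) :
    Λ.boxOf u k ∉ Λ.shapeLE u j := by
  rintro ⟨-, h⟩
  rw [(hu.boxOf_mem (by omega) hk).2] at h
  omega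

lemma shapeLE_succ (hu : Λ.IsStd n u) {k : ℕ} (hk : k + 1 ≤ n) :
    Λ.shapeLE u (k + 1) = insert (Λ.boxOf u (k + 1)) (Λ.shapeLE u k) := by
  obtain ⟨hmem, hval⟩ := hu.boxOf_mem (Nat.le_add_left 1 k) hk
  ext b
  constructor
  · rintro ⟨hb, hbk⟩
    rcases hbk.lt_or_eq with hbk | hbk
    · exact Or.inr ⟨hb, Nat.le_of_lt_succ hbk⟩
    · exact Or.inl (hu.1.injOn hb hmem (hbk.trans hval.symm))
  · rintro (rfl | ⟨hb, hbk⟩)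
    · exact ⟨hmem, hval.le⟩
    · exact ⟨hb, hbk.trans k.le_succ⟩

lemma isAddable_boxOf (hu : Λ.IsStd n u) {k : ℕ} (hk : k + 1 ≤ n) :
    Λ.IsAddable (Λ.shapeLE u k) (Λ.boxOf u (k + 1)) :=
  ⟨(hu.boxOf_mem (Nat.le_add_left 1 k) hk).1, hu.boxOf_notMem_shapeLE hk k.lt_succ_self,
    hu.shapeLE_succ hk ▸ hu.isDownset_shapeLE (k + 1)⟩

lemma shapeLE_eq_image (hu : Λ.IsStd n u) {j : ℕ} (hj : j ≤ n) :
    Λ.shapeLE u j = Λ.boxOf u '' Set.Icc 1 j := by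
  ext b
  constructor
  · rintro ⟨hb, hbj⟩
    exact ⟨u b, ⟨(hu.1.mapsTo hb).1, hbj⟩, hu.boxOf_apply hb⟩
  · rintro ⟨k, ⟨h1, hkj⟩, rfl⟩
    obtain ⟨hmem, hval⟩ := hu.boxOf_mem h1 (hkj.trans hj)
    exact ⟨hmem, hval.le.trans hkj⟩

end IsStd

lemma shapeLE_mono (Λ : MultiShape) (u : ℕ × ℕ × ℕ → ℕ) {i j : ℕ} (hij : i ≤ j) :
    Λ.shapeLE u i ⊆ Λ.shapeLE u j :=
  fun _ hb => ⟨hb.1, hb.2.trans hij⟩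

lemma sw_apply_left (l : ℕ) : sw l l = l + 1 := Equiv.swap_apply_left _ _

lemma sw_apply_right (l : ℕ) : sw l (l + 1) = l := Equiv.swap_apply_right _ _

lemma sw_symm (l : ℕ) : (sw l).symm = sw l := Equiv.symm_swap _ _

lemma sw_sw_apply (l k : ℕ) : sw l (sw l k) = k := Equiv.swap_apply_self _ _ _

lemma sw_image_Icc {l j : ℕ} (hl : 1 ≤ l) (hj : j ≠ l) : ⇑(sw l) '' Set.Icc 1 j = Set.Icc 1 j := by
  have hmaps : Set.MapsTo (sw l) (Set.Icc 1 j) (Set.Icc 1 j) := by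
    rintro x ⟨h1, h2⟩
    simp only [sw, Equiv.swap_apply_def]
    split_ifs <;> constructor <;> omega
  exact hmaps.image_subset.antisymm fun x hx => ⟨sw l x, hmaps hx, sw_sw_apply l x⟩

lemma shapeLE_eq_of_boxOf_eq {Λ : MultiShape} {n : ℕ} {t u : ℕ × ℕ × ℕ → ℕ} (ht : Λ.IsStd n t)
    (hu : Λ.IsStd n u) {l j : ℕ} (hl : 1 ≤ l) (hjn : j ≤ n) (hjl : j ≠ l)
    (h : ∀ i, 1 ≤ i → i ≤ j → Λ.boxOf u i = Λ.boxOf t (sw l i)) :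
    Λ.shapeLE u j = Λ.shapeLE t j :=
  calc Λ.shapeLE u j = Λ.boxOf u '' Set.Icc 1 j := hu.shapeLE_eq_image hjn
    _ = (fun i => Λ.boxOf t (sw l i)) '' Set.Icc 1 j :=
        Set.image_congr fun i hi => h i (Set.mem_Icc.mp hi).1 (Set.mem_Icc.mp hi).2
    _ = Λ.boxOf t '' Set.Icc 1 j := by rw [← Set.image_image, sw_image_Icc hl hjl]
    _ = Λ.shapeLE t j := (ht.shapeLE_eq_image hjn).symm

def IsSeparate {α : Type*} (c : ℕ × ℕ × ℕ → α) (Λ : MultiShape) (n : ℕ) : Prop :=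
  ∀ t, Λ.IsStd n t → ∀ k, 1 ≤ k → k ≤ n - 1 → c (Λ.boxOf t k) ≠ c (Λ.boxOf t (k + 1))

namespace IsSeparate

variable {α : Type*} {c : ℕ × ℕ × ℕ → α} {Λ : MultiShape} {n : ℕ}

theorem eq_of_isAddable (hc : IsSeparate c Λ n) (hfin : Λ.cells.Finite)
    (hsize : Λ.cells.ncard = n) {D : Set (ℕ × ℕ × ℕ)} {a b : ℕ × ℕ × ℕ} (hD : Λ.IsDownset D)
    (ha : Λ.IsAddable D a) (hb : Λ.IsAddable D b) (hab : c a = c b) : a = b := by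
  by_contra hne
  have hDfin : D.Finite := hfin.subset hD.1
  obtain ⟨f, hf, -⟩ := isFilling_empty.exists_extend (isDownset_empty Λ) hD hDfin D.empty_subset
  have hb' : Λ.IsAddable (insert a D) b := hb.mono ha.2.2 (Set.subset_insert a D)
    (by rintro (h | h); exacts [hne h.symm, hb.2.1 h])
  obtain ⟨g, hg, hgf⟩ := ((hf.update_of_isAddable hD hDfin ha).update_of_isAddable ha.2.2
    (hDfin.insert a) hb').exists_extend hb'.2.2 (isDownset_cells Λ) hfin hb'.2.2.1
  have hgt := hg.isStd hsize
  have hga : g a = D.ncard + 1 := by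
    rw [hgf (by simp), Function.update_of_ne hne, Function.update_self]
  have hgb : g b = g a + 1 := by
    rw [hgf (by simp), Function.update_self, Set.ncard_insert_of_notMem ha.2.1 hDfin, hga]
  have hbn : g b ≤ n := (hgt.1.mapsTo hb.1).2
  refine hc g hgt (D.ncard + 1) (by omega) (by omega) ?_
  rw [← hga, ← hgb, hgt.boxOf_apply ha.1, hgt.boxOf_apply hb.1, hab]

theorem boxOf_eq_boxOf_sw (hc : IsSeparate c Λ n) (hfin : Λ.cells.Finite)
    (hsize : Λ.cells.ncard = n) {t u : ℕ × ℕ × ℕ → ℕ} (ht : Λ.IsStd n t) (hu : Λ.IsStd n u)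
    {l : ℕ} (hl : 1 ≤ l) (hln : l + 1 ≤ n)
    (hres : ∀ k, 1 ≤ k → k ≤ n → c (Λ.boxOf t (sw l k)) = c (Λ.boxOf u k))
    {k : ℕ} (hk1 : 1 ≤ k) (hkn : k ≤ n) : Λ.boxOf u k = Λ.boxOf t (sw l k) := by
  induction k using Nat.strong_induction_on with
  | _ k ih =>
  obtain ⟨j, rfl⟩ : ∃ j, k = j + 1 := ⟨k - 1, by omega⟩
  have hshape : ∀ i ≤ j, i ≠ l → Λ.shapeLE u i = Λ.shapeLE t i := fun i hij hil =>
    shapeLE_eq_of_boxOf_eq ht hu hl (by omega) hil fun x hx1 hxi => ih x (by omega) hx1 (by omega)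
  rcases (by omega : j + 1 = l ∨ j = l ∨ (j + 1 ≠ l ∧ j ≠ l)) with rfl | rfl | ⟨hjl, hjl'⟩
  · have hβ : Λ.IsAddable (Λ.shapeLE t (j + 1)) (Λ.boxOf u (j + 1)) := by
      refine (hu.isAddable_boxOf hkn).mono (ht.isDownset_shapeLE _) ?_ ?_
      · rw [hshape j le_rfl (by omega)]
        exact Λ.shapeLE_mono t j.le_succ
      · rw [ht.shapeLE_succ hkn]
        rintro (h | h)
        · refine hc t ht (j + 1) hk1 (by omega) ?_
          rw [← h, ← hres (j + 1) hk1 hkn, sw_apply_left]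
        · exact hu.boxOf_notMem_shapeLE hkn j.lt_succ_self (hshape j le_rfl (by omega) ▸ h)
    rw [sw_apply_left]
    refine hc.eq_of_isAddable hfin hsize (ht.isDownset_shapeLE _) hβ (ht.isAddable_boxOf hln) ?_
    rw [← hres (j + 1) hk1 hkn, sw_apply_left]
  · obtain ⟨p, rfl⟩ : ∃ p, j = p + 1 := ⟨j - 1, by omega⟩
    have hprev : Λ.boxOf u (p + 1) = Λ.boxOf t (p + 1 + 1) := by
      rw [ih (p + 1) (by omega) hl (by omega), sw_apply_left]
    have hβ : Λ.IsAddable (Λ.shapeLE u (p + 1)) (Λ.boxOf t (p + 1)) := by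
      refine (ht.isAddable_boxOf (by omega)).mono (hu.isDownset_shapeLE _) ?_ ?_
      · rw [← hshape p (by omega) (by omega)]
        exact Λ.shapeLE_mono u p.le_succ
      · rw [hu.shapeLE_succ (by omega), hprev]
        rintro (h | h)
        · have := congrArg t h
          rw [(ht.boxOf_mem hl (by omega)).2, (ht.boxOf_mem (by omega) hln).2] at this
          omega
        · exact ht.boxOf_notMem_shapeLE (by omega) p.lt_succ_self
            (hshape p (by omega) (by omega) ▸ h)
    rw [sw_apply_right]
    refine hc.eq_of_isAddable hfin hsize (hu.isDownset_shapeLE _) (hu.isAddable_boxOf hkn) hβ ?_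
    rw [← hres (p + 1 + 1) hk1 hkn, sw_apply_right]
  · have hfix : sw l (j + 1) = j + 1 := Equiv.swap_apply_of_ne_of_ne hjl (by omega)
    have hβ := ht.isAddable_boxOf hkn
    rw [← hshape j le_rfl (by omega)] at hβ
    rw [hfix]
    refine hc.eq_of_isAddable hfin hsize (hu.isDownset_shapeLE _) (hu.isAddable_boxOf hkn) hβ ?_
    rw [← hres (j + 1) hk1 hkn, hfix]

theorem eq_sw_comp (hc : IsSeparate c Λ n) (hfin : Λ.cells.Finite) (hsize : Λ.cells.ncard = n)
    {t u : ℕ × ℕ × ℕ → ℕ} (ht : Λ.IsStd n t) (hu : Λ.IsStd n u) {l : ℕ} (hl : 1 ≤ l)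
    (hln : l + 1 ≤ n) (hres : ∀ k, 1 ≤ k → k ≤ n → c (Λ.boxOf t (sw l k)) = c (Λ.boxOf u k)) :
    u = sw l ∘ t := by
  funext b
  by_cases hb : b ∈ Λ.cells
  · obtain ⟨h1, hn⟩ : sw l (t b) ∈ Set.Icc 1 n :=
      sw_image_Icc hl (show n ≠ l by omega) ▸ Set.mem_image_of_mem _ (ht.1.mapsTo hb)
    have hbox := hc.boxOf_eq_boxOf_sw hfin hsize ht hu hl hln hres h1 hn
    rw [sw_sw_apply, ht.boxOf_apply hb] at hbox
    simpa only [hbox, Function.comp_apply] using (hu.boxOf_mem h1 hn).2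
  · rw [Function.comp_apply, hu.2.2.2 b hb, ht.2.2.2 b hb]
    exact (Equiv.swap_apply_of_ne_of_ne (by omega) (by omega)).symm

end IsSeparate

end MultiShape

open MultiShape in
theorem stmt16_general (K : Type) [Field K] (q : K) (e : ℕ) (Q : ℕ → K)
    (n : ℕ) (Λ : MultiShape)
    (hfin : Λ.cells.Finite) (hsize : Λ.cells.ncard = n)
    (hsepL : ∀ t : ℕ × ℕ × ℕ → ℕ, Λ.IsStd n t → ∀ k, 1 ≤ k → k ≤ n - 1 →
      qval q (resAt q (Qcomp e Q) Λ t k) ≠ qval q (resAt q (Qcomp e Q) Λ t (k + 1))) :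
    ∀ t : ℕ × ℕ × ℕ → ℕ, Λ.IsStd n t → ∀ l, 1 ≤ l → l ≤ n - 1 →
      (Λ.IsStd n (⇑(sw l) ∘ t) ↔
        ∃ u : ℕ × ℕ × ℕ → ℕ, Λ.IsStd n u ∧ ∀ k, 1 ≤ k → k ≤ n →
          qval q (resAt q (Qcomp e Q) Λ t (sw l k)) =
            qval q (resAt q (Qcomp e Q) Λ u k)) ∧
      (∀ u : ℕ × ℕ × ℕ → ℕ, Λ.IsStd n u →
        (∀ k, 1 ≤ k → k ≤ n →
          qval q (resAt q (Qcomp e Q) Λ t (sw l k)) =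
            qval q (resAt q (Qcomp e Q) Λ u k)) →
        u = ⇑(sw l) ∘ t) := by
  intro t ht l hl hl2
  have hln : l + 1 ≤ n := by omega
  have hsep : IsSeparate (fun b => qval q (resBox q (Qcomp e Q) b)) Λ n := hsepL
  refine ⟨⟨fun hstd => ⟨_, hstd, fun k _ _ => ?_⟩,
    fun ⟨u, hu, hres⟩ => hsep.eq_sw_comp hfin hsize ht hu hl hln hres ▸ hu⟩,
    fun u hu hres => hsep.eq_sw_comp hfin hsize ht hu hl hln hres⟩
  exact congrArg (fun b => qval q (resBox q (Qcomp e Q) b))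
    (show Λ.boxOf t (sw l k) = Λ.boxOf (sw l ∘ t) k by rw [boxOf_perm_comp _ ht.1.injOn, sw_symm])

open MultiShape in
/-- Suppose `(q, Q)` is separate with respect to `λ` and the separateness
condition `P_n^{(•)}(q², Q) ≠ 0` holds (equivalently, `(q,Q)` is separate with
respect to every shape in `P^{•,m}_{n+1}`).  Then for a standard tableau `t` of
shape `λ` and `1 ≤ l ≤ n-1`:  `s_l·t` is standard iff there is a standard
tableau `u` of shape `λ` with `s_l·𝚚(res(t)) = 𝚚(res(u))`; and any such `u`
equals `s_l·t`. -/
theorem stmt16 (K : Type) [Field K] [IsAlgClosed K] (hchar : ringChar K ≠ 2)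
    (q : K) (hq0 : q ≠ 0) (hq1 : q ≠ 1) (hqm1 : q ≠ -1)
    (e m : ℕ) (he : e ≤ 2) (Q : ℕ → K) (hQ : ∀ i < m, Q i ≠ 0)
    (n : ℕ) (Λ : MultiShape) (hΛ : IsShape Λ e m)
    (hfin : Λ.cells.Finite) (hsize : Λ.cells.ncard = n)
    (hsepL : ∀ t : ℕ × ℕ × ℕ → ℕ, Λ.IsStd n t → ∀ k, 1 ≤ k → k ≤ n - 1 →
      qval q (resAt q (Qcomp e Q) Λ t k) ≠ qval q (resAt q (Qcomp e Q) Λ t (k + 1)))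
    (hsep : ∀ Λ' : MultiShape, IsShape Λ' e m → Λ'.cells.Finite →
      Λ'.cells.ncard = n + 1 → ∀ t' : ℕ × ℕ × ℕ → ℕ, Λ'.IsStd (n + 1) t' →
      ∀ k, 1 ≤ k → k ≤ n →
        qval q (resAt q (Qcomp e Q) Λ' t' k) ≠
          qval q (resAt q (Qcomp e Q) Λ' t' (k + 1))) :
    ∀ t : ℕ × ℕ × ℕ → ℕ, Λ.IsStd n t → ∀ l, 1 ≤ l → l ≤ n - 1 →
      (Λ.IsStd n (⇑(sw l) ∘ t) ↔
        ∃ u : ℕ × ℕ × ℕ → ℕ, Λ.IsStd n u ∧ ∀ k, 1 ≤ k → k ≤ n →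
          qval q (resAt q (Qcomp e Q) Λ t (sw l k)) =
            qval q (resAt q (Qcomp e Q) Λ u k)) ∧
      (∀ u : ℕ × ℕ × ℕ → ℕ, Λ.IsStd n u →
        (∀ k, 1 ≤ k → k ≤ n →
          qval q (resAt q (Qcomp e Q) Λ t (sw l k)) =
            qval q (resAt q (Qcomp e Q) Λ u k)) →
        u = ⇑(sw l) ∘ t) :=
  stmt16_general K q e Q n Λ hfin hsize hsepL
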